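/- Let m be odd. Then the torsion subgroup of the n-th integral set-theoretic Yang–Baxter cohomology group of the cyclic biquandle C_m is annihilated by m: for every n-cocycle f : (ℤ/mℤ)^n → ℤ (δ^n f = 0) such that some positive multiple of f is a coboundary (there exist k ≥ 1 and g with δ^{n−1} g = k·f), the multiple m·f is itself a coboundary, i.e. there exists h : (ℤ/mℤ)^{n−1} → ℤ with δ^{n−1} h = m·f. -/
import Mathlib


/-- The `i`-th left face map of the set-theoretic Yang–Baxter (co)chain complex of the
cyclic biquandle `C_m = ℤ/mℤ` (with `R(a,b) = (b+1, a-1)`): it drops the `i`-th coordinate,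
subtracting `1` from all earlier coordinates. -/
def dl (m n : ℕ) (i : Fin (n + 1)) (x : Fin (n + 1) → ZMod m) : Fin n → ZMod m :=
  fun j => if (j : ℕ) < (i : ℕ) then x j.castSucc - 1 else x j.succ

/-- The `i`-th right face map: it drops the `i`-th coordinate, adding `1` to all later
coordinates. -/
def dr (m n : ℕ) (i : Fin (n + 1)) (x : Fin (n + 1) → ZMod m) : Fin n → ZMod m :=
  fun j => if (j : ℕ) < (i : ℕ) then x j.castSucc else x j.succ + 1

/-- The Yang–Baxter coboundary `δⁿ` of the cyclic biquandle `C_m` with coefficients in an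
abelian group `A`:
`(δⁿ f)(x₁,…,x_{n+1}) = Σᵢ (−1)^{i−1} [f(x₁−1,…,x_{i−1}−1,x_{i+1},…) − f(x₁,…,x_{i−1},x_{i+1}+1,…)]`. -/
def delta {A : Type*} [AddCommGroup A] (m n : ℕ) (f : (Fin n → ZMod m) → A) :
    (Fin (n + 1) → ZMod m) → A :=
  fun x => ∑ i : Fin (n + 1), (-1 : ℤ) ^ (i : ℕ) • (f (dl m n i x) - f (dr m n i x))

/-- The diagonal shift operator `S` on cochains: `(Sf)(x₁,…,x_k) = f(x₁−1,…,x_k−1)`. -/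
def shiftC {A : Type*} (m k : ℕ) (f : (Fin k → ZMod m) → A) : (Fin k → ZMod m) → A :=
  fun x => f fun j => x j - 1

/-- The "left half" of the Yang–Baxter coboundary. -/
def Dop (m n : ℕ) (f : (Fin n → ZMod m) → ℤ) : (Fin (n + 1) → ZMod m) → ℤ :=
  fun x => ∑ i : Fin (n + 1), (-1 : ℤ) ^ (i : ℕ) * f (dl m n i x)

lemma dl_add (m n : ℕ) (i : Fin (n+1)) (x : Fin (n+1) → ZMod m) (c : ZMod m) :
    dl m n i (fun j => x j + c) = fun j => dl m n i x j + c := by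
  funext j; unfold dl; split_ifs <;> ring

lemma dr_eq (m n : ℕ) (i : Fin (n+1)) (x : Fin (n+1) → ZMod m) :
    dr m n i x = dl m n i (fun j => x j + 1) := by
  funext j; simp only [dl, dr]; split_ifs <;> ring

lemma delta_eq (m n : ℕ) (f : (Fin n → ZMod m) → ℤ) (x : Fin (n+1) → ZMod m) :
    delta m n f x = Dop m n f x - Dop m n f (fun j => x j + 1) := by
  simp only [delta, Dop, smul_eq_mul, mul_sub, Finset.sum_sub_distrib]
  congr 1
  refine Finset.sum_congr rfl fun i _ => ?_
  rw [dr_eq]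

lemma Dop_add (m n : ℕ) (f : (Fin n → ZMod m) → ℤ) (x : Fin (n+1) → ZMod m) (c : ZMod m) :
    Dop m n (fun z => f (fun j => z j + c)) x = Dop m n f (fun j => x j + c) := by
  unfold Dop
  refine Finset.sum_congr rfl fun i _ => ?_
  rw [dl_add]

lemma dl_zero_cons (m n : ℕ) (x : Fin (n+1) → ZMod m) :
    dl m (n+1) 0 (Fin.cons 1 x) = x := by
  funext j; simp [dl]

lemma dl_succ_cons (m n : ℕ) (i : Fin (n+1)) (x : Fin (n+1) → ZMod m) :
    dl m (n+1) i.succ (Fin.cons 1 x) = Fin.cons 0 (dl m n i x) := by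
  funext j
  refine Fin.cases ?_ (fun p => ?_) j
  · simp [dl]
  · simp only [dl, Fin.cons_succ, Fin.val_succ, Nat.add_lt_add_iff_right,
      ← Fin.succ_castSucc]

lemma homotopy (m n : ℕ) (f : (Fin (n+1) → ZMod m) → ℤ) (x : Fin (n+1) → ZMod m) :
    f x = Dop m n (fun z => f (Fin.cons 0 z)) x + Dop m (n+1) f (Fin.cons 1 x) := by
  have h1 : Dop m (n+1) f (Fin.cons 1 x)
      = f x + ∑ i : Fin (n+1), (-1:ℤ)^((i:ℕ)+1) * f (Fin.cons 0 (dl m n i x)) := by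
    rw [Dop, Fin.sum_univ_succ]
    simp [dl_zero_cons, dl_succ_cons, Fin.val_succ]
  have h2 : ∑ i : Fin (n+1), (-1:ℤ)^((i:ℕ)+1) * f (Fin.cons 0 (dl m n i x))
      = - ∑ i : Fin (n+1), (-1:ℤ)^(i:ℕ) * f (Fin.cons 0 (dl m n i x)) := by
    rw [← Finset.sum_neg_distrib]
    exact Finset.sum_congr rfl fun i _ => by ring
  rw [h1, h2, Dop]
  ring

lemma delta_sum_mul (m n : ℕ) (s : Finset ℕ) (c : ℕ → ℤ)
    (F : ℕ → (Fin n → ZMod m) → ℤ) (x : Fin (n+1) → ZMod m) :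
    delta m n (fun z => ∑ l ∈ s, c l * F l z) x
      = ∑ l ∈ s, c l * delta m n (F l) x := by
  simp only [delta, smul_eq_mul, ← Finset.sum_sub_distrib, Finset.mul_sum, ← mul_sub]
  rw [Finset.sum_comm]
  exact Finset.sum_congr rfl fun l _ => Finset.sum_congr rfl fun i _ => by ring

/-- STATEMENT 15: for odd `m`, the torsion of `H^n_{YB}(C_m;ℤ)` is annihilated by `m`:
if `f` is an integral `n`-cocycle of the Yang–Baxter cochain complex of the cyclic
biquandle `C_m` some positive multiple `k·f` of which is a coboundary, then `m·f` is itself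
a coboundary. (The degree `n ≥ 1` is realized as `n+1` with `n : ℕ` arbitrary.) -/
theorem torsion_annihilated_by_m_of_odd (m n : ℕ) (hm : Odd m)
    (f : (Fin (n + 1) → ZMod m) → ℤ) (hf : delta m (n + 1) f = 0)
    (k : ℕ) (hk : 1 ≤ k) (g : (Fin n → ZMod m) → ℤ)
    (hg : delta m n g = fun x => (k : ℤ) * f x) :
    ∃ h : (Fin n → ZMod m) → ℤ, delta m n h = fun x => (m : ℤ) * f x := by
  have hm0 : m ≠ 0 := by
    obtain ⟨t, ht⟩ := hm; omega
  have hk0 : (k : ℤ) ≠ 0 := by positivity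
  -- pointwise version of hg
  have hgx : ∀ x, Dop m n g x - Dop m n g (fun j => x j + 1) = (k:ℤ) * f x := by
    intro x
    rw [← delta_eq, hg]
  -- pointwise version of hf
  have hfx : ∀ x : Fin (n+2) → ZMod m,
      Dop m (n+1) f x = Dop m (n+1) f (fun j => x j + 1) := by
    intro x
    have := congrFun hf x
    rw [delta_eq] at this
    simp only [Pi.zero_apply] at this
    linarith
  -- periodicity of Dop f under diagonal nat shifts
  have hper : ∀ (x : Fin (n+2) → ZMod m) (l : ℕ),
      Dop m (n+1) f (fun j => x j + (l : ZMod m)) = Dop m (n+1) f x := by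
    intro x l
    induction l with
    | zero => simp
    | succ l ih =>
      have hx : (fun j => x j + ((l+1 : ℕ) : ZMod m))
          = fun j => (x j + (l : ZMod m)) + 1 := by
        funext j; push_cast; ring
      rw [hx, ← hfx (fun j => x j + (l : ZMod m)), ih]
  -- Step A: the diagonal orbit sum of f vanishes
  have hsum : ∀ x : Fin (n+1) → ZMod m,
      ∑ l ∈ Finset.range m, f (fun j => x j + (l : ZMod m)) = 0 := by
    intro x
    set G : ℕ → ℤ := fun l => Dop m n g (fun j => x j + (l : ZMod m)) with hG
    have h2 : ∑ l ∈ Finset.range m, (G l - G (l+1)) = G 0 - G m :=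
      Finset.sum_range_sub' G m
    have hGm : G m = G 0 := by
      simp [hG, ZMod.natCast_self]
    have h3 : ∀ l, G l - G (l+1) = (k:ℤ) * f (fun j => x j + (l : ZMod m)) := by
      intro l
      have := hgx (fun j => x j + (l : ZMod m))
      have hx : (fun j => (x j + (l : ZMod m)) + 1)
          = fun j => x j + ((l+1 : ℕ) : ZMod m) := by
        funext j; push_cast; ring
      rw [hx] at this
      exact this
    have h4 : (k:ℤ) * ∑ l ∈ Finset.range m, f (fun j => x j + (l : ZMod m)) = 0 := by
      rw [Finset.mul_sum]
      calc ∑ l ∈ Finset.range m, (k:ℤ) * f (fun j => x j + (l : ZMod m))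
          = ∑ l ∈ Finset.range m, (G l - G (l+1)) :=
            Finset.sum_congr rfl fun l _ => (h3 l).symm
        _ = G 0 - G m := h2
        _ = 0 := by rw [hGm]; ring
    exact (mul_eq_zero.mp h4).resolve_left hk0
  -- Step B: f is a Dop-cocycle
  have hDf : ∀ x : Fin (n+2) → ZMod m, Dop m (n+1) f x = 0 := by
    intro x
    have h1 : (m:ℤ) * Dop m (n+1) f x
        = ∑ l ∈ Finset.range m, Dop m (n+1) f (fun j => x j + (l : ZMod m)) := by
      rw [Finset.sum_congr rfl (fun l _ => hper x l), Finset.sum_const,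
        Finset.card_range, nsmul_eq_mul]
    have h2 : ∑ l ∈ Finset.range m, Dop m (n+1) f (fun j => x j + (l : ZMod m))
        = Dop m (n+1) (fun z => ∑ l ∈ Finset.range m, f (fun j => z j + (l : ZMod m))) x := by
      simp only [Dop, Finset.mul_sum]
      rw [Finset.sum_comm]
      refine Finset.sum_congr rfl fun i _ => Finset.sum_congr rfl fun l _ => ?_
      rw [dl_add]
    have h3 : Dop m (n+1)
        (fun z => ∑ l ∈ Finset.range m, f (fun j => z j + (l : ZMod m))) x = 0 := by
      have : (fun z : Fin (n+1) → ZMod m =>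
          ∑ l ∈ Finset.range m, f (fun j => z j + (l : ZMod m)))
          = fun _ => (0:ℤ) := funext fun z => hsum z
      rw [this]
      simp [Dop]
    rw [h2, h3] at h1
    have : (m:ℤ) ≠ 0 := Int.natCast_ne_zero.mpr hm0
    exact (mul_eq_zero.mp h1).resolve_left this
  -- Step C: f = Dop e
  set e : (Fin n → ZMod m) → ℤ := fun z => f (Fin.cons 0 z) with he
  have hfe : ∀ x, f x = Dop m n e x := by
    intro x
    have := homotopy m n f x
    rw [hDf (Fin.cons 1 x), add_zero] at this
    exact this
  -- the coboundary of shifted e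
  have hδl : ∀ (l : ℕ) (x : Fin (n+1) → ZMod m),
      delta m n (fun z => e (fun j => z j + (l : ZMod m))) x
        = f (fun j => x j + (l : ZMod m)) - f (fun j => x j + ((l+1 : ℕ) : ZMod m)) := by
    intro l x
    rw [delta_eq, Dop_add, Dop_add, ← hfe, ← hfe]
    have hx : (fun j => (x j + 1) + (l : ZMod m))
        = fun j => x j + ((l+1 : ℕ) : ZMod m) := by
      funext j; push_cast; ring
    rw [hx]
  -- Step D: the explicit primitive
  refine ⟨fun z => ∑ l ∈ Finset.range m,
      ((m:ℤ) - 1 - (l:ℤ)) * e (fun j => z j + (l : ZMod m)), ?_⟩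
  funext x
  rw [delta_sum_mul m n (Finset.range m) (fun l => (m:ℤ) - 1 - (l:ℤ))
    (fun l z => e (fun j => z j + (l : ZMod m))) x]
  simp only [hδl]
  set a : ℕ → ℤ := fun l => f (fun j => x j + (l : ZMod m)) with ha
  have ham : a m = a 0 := by simp [ha, ZMod.natCast_self]
  have hax : a 0 = f x := by simp [ha]
  have hsa : ∑ l ∈ Finset.range m, a l = 0 := hsum x
  have hshift : ∑ l ∈ Finset.range m, a (l+1) = 0 := by
    have := Finset.sum_range_succ' a m
    rw [Finset.sum_range_succ, hsa, ham] at this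
    omega
  set G : ℕ → ℤ := fun l => ((m:ℤ) - 1 - (l:ℤ)) * a l with hGdef
  have htel : ∑ l ∈ Finset.range m, (G l - G (l+1)) = G 0 - G m :=
    Finset.sum_range_sub' G m
  have e1 : ∀ l : ℕ, ((m:ℤ) - 1 - (l:ℤ)) * (a l - a (l+1)) = (G l - G (l+1)) - a (l+1) := by
    intro l
    have hc : ((l+1:ℕ):ℤ) = (l:ℤ)+1 := by push_cast; ring
    simp only [hGdef, hc]
    ring
  calc ∑ l ∈ Finset.range m, ((m:ℤ) - 1 - (l:ℤ)) * (a l - a (l+1))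
      = ∑ l ∈ Finset.range m, ((G l - G (l+1)) - a (l+1)) :=
        Finset.sum_congr rfl fun l _ => e1 l
    _ = (G 0 - G m) - ∑ l ∈ Finset.range m, a (l+1) := by
        rw [Finset.sum_sub_distrib, htel]
    _ = (m:ℤ) * f x := by
        rw [hshift, hGdef]
        simp only [ham, hax]
        push_cast
        ring
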